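/- With H_n the truncations of H as polynomials, for all n ≥ 1 one has H_{n−2}(x^2)·H_n(x) − H_{n−1}(x)·H_{n−1}(x^2) = (−1)^{n−1}·x^{2^n − 1}. -/

import Mathlib

/-- Substitution `q ↦ q^k` on formal power series: `psub k f = f(q^k)`. -/
noncomputable def psub (k : ℕ) (f : PowerSeries ℂ) : PowerSeries ℂ :=
  PowerSeries.mk fun n => if k ∣ n then PowerSeries.coeff (R := ℂ) (n / k) f else 0

theorem stmt9 (H : PowerSeries ℂ)
    (h1 : PowerSeries.constantCoeff (R := ℂ) H = 1)
    (heq : H = psub 2 H + PowerSeries.X * psub 4 H)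
    (Hn : ℤ → Polynomial ℂ)
    (hneg : ∀ n : ℤ, n < 0 → Hn n = 1)
    (htr : ∀ n : ℕ, Hn n = PowerSeries.trunc (2 ^ n) H) :
    ∀ n : ℕ, 1 ≤ n →
      (Hn ((n : ℤ) - 2)).comp (Polynomial.X ^ 2) * Hn n
        - Hn ((n : ℤ) - 1) * (Hn ((n : ℤ) - 1)).comp (Polynomial.X ^ 2)
      = (-1 : Polynomial ℂ) ^ (n - 1) * Polynomial.X ^ (2 ^ n - 1) := by
  -- coefficient recurrence
  have hco : ∀ m : ℕ, (PowerSeries.coeff (R := ℂ) m) H =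
      (if 2 ∣ m then (PowerSeries.coeff (R := ℂ) (m / 2)) H else 0) +
      (if 4 ∣ m - 1 ∧ m ≠ 0 then (PowerSeries.coeff (R := ℂ) ((m - 1) / 4)) H else 0) := by
    intro m
    conv_lhs => rw [heq]
    rw [map_add]
    congr 1
    · simp only [psub, PowerSeries.coeff_mk]
    · cases m with
      | zero => simp
      | succ k =>
        rw [PowerSeries.coeff_succ_X_mul]
        simp [psub, PowerSeries.coeff_mk]
  have h2 : ∀ m : ℕ, (PowerSeries.coeff (R := ℂ) (2 * m)) H = (PowerSeries.coeff (R := ℂ) m) H := by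
    intro m
    rw [hco (2 * m), if_pos ⟨m, rfl⟩, Nat.mul_div_cancel_left m (by norm_num),
      if_neg (by rintro ⟨⟨t, ht⟩, hm⟩; omega), add_zero]
  have h41 : ∀ m : ℕ, (PowerSeries.coeff (R := ℂ) (4 * m + 1)) H = (PowerSeries.coeff (R := ℂ) m) H := by
    intro m
    rw [hco (4 * m + 1), if_neg (by rintro ⟨t, ht⟩; omega),
      if_pos ⟨⟨m, rfl⟩, by omega⟩, zero_add, Nat.add_sub_cancel,
      Nat.mul_div_cancel_left m (by norm_num)]
  have h43 : ∀ m : ℕ, (PowerSeries.coeff (R := ℂ) (4 * m + 3)) H = 0 := by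
    intro m
    rw [hco (4 * m + 3), if_neg (by rintro ⟨t, ht⟩; omega),
      if_neg (by rintro ⟨⟨t, ht⟩, hm⟩; omega), add_zero]
  have h0 : Hn (0 : ℤ) = 1 := by
    have := htr 0
    norm_num at this
    rw [this]
    ext k
    cases k with
    | zero => simp [PowerSeries.coeff_zero_eq_constantCoeff, h1]
    | succ k => simp [Polynomial.coeff_one]
  have hx1 : Hn (1 : ℤ) = 1 + Polynomial.X := by
    have := htr 1
    norm_num at this
    rw [this]
    have hc1 : (PowerSeries.coeff (R := ℂ) 1) H = 1 := by
      have := h41 0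
      norm_num at this
      rw [this]; exact h1
    ext k
    rw [PowerSeries.coeff_trunc]
    match k with
    | 0 => simp [PowerSeries.coeff_zero_eq_constantCoeff, h1]
    | 1 => simp [hc1, Polynomial.coeff_one]
    | (k+2) => simp [Polynomial.coeff_one, Polynomial.coeff_X]
  -- the key recursion
  have hrec : ∀ n : ℕ, 1 ≤ n → Hn (n : ℤ) =
      (Hn ((n : ℤ) - 1)).comp (Polynomial.X ^ 2)
        + Polynomial.X * (Hn ((n : ℤ) - 2)).comp (Polynomial.X ^ 4) := by
    intro n hn
    rcases n with _ | _ | k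
    · omega
    · norm_num
      rw [h0, hx1, hneg (-1) (by norm_num)]
      simp [Polynomial.one_comp]
    · have e1 : (((k + 2 : ℕ) : ℤ)) - 1 = ((k + 1 : ℕ) : ℤ) := by push_cast; ring
      have e2 : (((k + 2 : ℕ) : ℤ)) - 2 = ((k : ℕ) : ℤ) := by push_cast; ring
      rw [e1, e2, htr, htr, htr, ← Polynomial.expand_eq_comp_X_pow,
        ← Polynomial.expand_eq_comp_X_pow]
      have ht : (0 : ℕ) < 2 ^ k := pow_pos (by norm_num) k
      have hp1 : (2 : ℕ) ^ (k + 1) = 2 * 2 ^ k := by ring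
      have hp2 : (2 : ℕ) ^ (k + 2) = 4 * 2 ^ k := by ring
      ext j
      rw [PowerSeries.coeff_trunc, Polynomial.coeff_add,
        Polynomial.coeff_expand (by norm_num : 0 < 2), PowerSeries.coeff_trunc]
      cases j with
      | zero =>
        simp only [Nat.zero_lt_succ, Nat.zero_div, Nat.dvd_zero, if_true, if_pos (by omega : 0 < 2 ^ (k+2)), if_pos (by omega : 0 < 2 ^ (k+1))]
        rw [Polynomial.coeff_X_mul_zero, add_zero]
      | succ j =>
        rw [Polynomial.coeff_X_mul, Polynomial.coeff_expand (by norm_num : 0 < 4),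
          PowerSeries.coeff_trunc]
        obtain ⟨m, r, hr, rfl⟩ : ∃ m r, r < 4 ∧ j = 4 * m + r :=
          ⟨j / 4, j % 4, Nat.mod_lt _ (by norm_num), by omega⟩
        interval_cases r
        · -- j+1 = 4m+1
          rw [if_neg (show ¬ (2:ℕ) ∣ 4 * m + 0 + 1 by omega),
            if_pos (show (4:ℕ) ∣ 4 * m + 0 by omega), zero_add,
            show (4 * m + 0) / 4 = m by omega,
            show 4 * m + 0 + 1 = 4 * m + 1 by ring, h41]
          exact if_congr (by omega) rfl rfl
        · -- j+1 = 4m+2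
          rw [if_pos (show (2:ℕ) ∣ 4 * m + 1 + 1 by omega),
            if_neg (show ¬ (4:ℕ) ∣ 4 * m + 1 by omega), add_zero,
            show (4 * m + 1 + 1) / 2 = 2 * m + 1 by omega,
            show 4 * m + 1 + 1 = 2 * (2 * m + 1) by ring, h2]
          exact if_congr (by omega) rfl rfl
        · -- j+1 = 4m+3
          rw [if_neg (show ¬ (2:ℕ) ∣ 4 * m + 2 + 1 by omega),
            if_neg (show ¬ (4:ℕ) ∣ 4 * m + 2 by omega), add_zero,
            show 4 * m + 2 + 1 = 4 * m + 3 by ring, h43]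
          simp
        · -- j+1 = 4m+4
          rw [if_pos (show (2:ℕ) ∣ 4 * m + 3 + 1 by omega),
            if_neg (show ¬ (4:ℕ) ∣ 4 * m + 3 by omega), add_zero,
            show (4 * m + 3 + 1) / 2 = 2 * (m + 1) by omega,
            show 4 * m + 3 + 1 = 2 * (2 * (m + 1)) by ring, h2]
          exact if_congr (by omega) rfl rfl
  have hcomp2 : ∀ p : Polynomial ℂ,
      (p.comp (Polynomial.X ^ 2)).comp (Polynomial.X ^ 2) = p.comp (Polynomial.X ^ 4) := by
    intro p
    rw [Polynomial.comp_assoc, Polynomial.X_pow_comp, ← pow_mul]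
  intro n hn
  induction n, hn using Nat.le_induction with
  | base =>
    rw [show ((1 : ℕ) : ℤ) - 2 = -1 by norm_num, show ((1 : ℕ) : ℤ) - 1 = 0 by norm_num,
      show ((1 : ℕ) : ℤ) = (1 : ℤ) by norm_num, hneg (-1) (by norm_num), h0, hx1]
    simp [Polynomial.one_comp]
  | succ n hn ih =>
    have e1 : (((n + 1 : ℕ) : ℤ)) - 2 = ((n : ℤ)) - 1 := by push_cast; ring
    have e2 : (((n + 1 : ℕ) : ℤ)) - 1 = ((n : ℕ) : ℤ) := by push_cast; ring
    rw [e1, e2]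
    have hr1 := hrec (n + 1) (by omega)
    rw [e1, e2] at hr1
    have hr2 := hrec n hn
    -- compose ih with X^2
    have hIH2 := congrArg (fun p => p.comp ((Polynomial.X : Polynomial ℂ) ^ 2)) ih
    simp only [Polynomial.sub_comp, Polynomial.mul_comp, hcomp2, Polynomial.pow_comp,
      Polynomial.neg_comp, Polynomial.one_comp, Polynomial.X_pow_comp, Polynomial.X_comp] at hIH2
    obtain ⟨m, rfl⟩ : ∃ m, n = m + 1 := ⟨n - 1, by omega⟩
    have ht : (1 : ℕ) ≤ 2 ^ (m + 1) := Nat.one_le_two_pow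
    have hsign : ((-1 : Polynomial ℂ)) ^ (m + 1 + 1 - 1) = -(-1 : Polynomial ℂ) ^ (m + 1 - 1) := by
      simp [pow_succ]
    have hpow : ((Polynomial.X : Polynomial ℂ) ^ 2) ^ (2 ^ (m + 1) - 1) * Polynomial.X
        = Polynomial.X ^ (2 ^ (m + 1 + 1) - 1) := by
      rw [← pow_mul, ← pow_succ]
      congr 1
      have : (2 : ℕ) ^ (m + 1 + 1) = 2 * 2 ^ (m + 1) := by ring
      omega
    rw [hr1, hsign, ← hpow]
    linear_combination (-(Polynomial.X : Polynomial ℂ)) * hIH2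
      - (Hn ((m + 1 : ℕ) : ℤ)).comp ((Polynomial.X : Polynomial ℂ) ^ 2) * hr2
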